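/- The symmetric exponential distribution ν with density (1/2)e^{-|x|} satisfies the Λ*-condition: lim_{x→∞} (-ln ν([x,∞)))/Λ_ν*(x) = 1. -/

import Mathlib

open MeasureTheory Filter Set Real Topology
open scoped NNReal ENNReal

noncomputable def nuExp : Measure ℝ :=
  volume.withDensity fun x => ENNReal.ofReal ((1 / 2) * exp (-|x|))

noncomputable def LambdaNu (t : ℝ) : ℝ := log (∫ s, exp (t * s) ∂nuExp)

noncomputable def LambdaNuStar (x : ℝ) : ℝ :=
  ⨆ t : (Ioo (-1:ℝ) 1), ((t : ℝ) * x - LambdaNu t)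

instance : Nonempty (Ioo (-1:ℝ) 1) := ⟨⟨0, by norm_num⟩⟩

lemma exp_int_Ioi {b : ℝ} (hb : 0 < b) : ∫ s in Ioi (0:ℝ), exp (-(b * s)) = 1 / b := by
  have := integral_comp_mul_left_Ioi (fun y => exp (-y)) 0 hb
  simp only [mul_zero, integral_exp_neg_Ioi, neg_zero, exp_zero, smul_eq_mul, mul_one] at this
  rw [this, one_div]

lemma exp_intOn_Ioi {b : ℝ} (hb : 0 < b) :
    IntegrableOn (fun s : ℝ => exp (-(b * s))) (Ioi 0) := by
  simpa [neg_mul] using exp_neg_integrableOn_Ioi 0 hb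

lemma exp_intOn_Iic {c : ℝ} (hc : 0 < c) :
    IntegrableOn (fun s : ℝ => exp (c * s)) (Iic (0:ℝ)) := by
  have h_map : ((volume : Measure ℝ).restrict (Ici (0:ℝ))).map Neg.neg
      = (volume : Measure ℝ).restrict (Iic (0:ℝ)) := by
    conv => rhs; rw [← Measure.map_neg_eq_self (volume : Measure ℝ),
      measurableEmbedding_neg.restrict_map]
    simp
  rw [IntegrableOn, ← h_map, measurableEmbedding_neg.integrable_map_iff]
  have : IntegrableOn (fun s : ℝ => exp (-(c * s))) (Ici 0) :=
    (integrableOn_Ici_iff_integrableOn_Ioi).mpr (exp_intOn_Ioi hc)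
  refine this.congr_fun (fun s _ => ?_) measurableSet_Ici
  simp [Function.comp, mul_neg]

lemma exp_int_Iic {c : ℝ} (hc : 0 < c) : ∫ s in Iic (0:ℝ), exp (c * s) = 1 / c := by
  have h := integral_comp_neg_Iic (0:ℝ) (fun y => exp (-(c * y)))
  simp only [mul_neg, neg_neg, neg_zero] at h
  rw [← exp_int_Ioi hc, ← h]

lemma nuExp_Ici {x : ℝ} (hx : 0 ≤ x) : (nuExp (Ici x)).toReal = (1/2) * exp (-x) := by
  rw [nuExp, withDensity_apply _ measurableSet_Ici]
  have h1 : ∀ᵐ s ∂((volume : Measure ℝ).restrict (Ici x)),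
      ENNReal.ofReal ((1/2) * exp (-|s|)) = ENNReal.ofReal ((1/2) * exp (-s)) := by
    filter_upwards [ae_restrict_mem measurableSet_Ici] with s hs
    rw [abs_of_nonneg (hx.trans hs)]
  rw [lintegral_congr_ae h1]
  have hint : IntegrableOn (fun s : ℝ => (1/2) * exp (-s)) (Ici x) := by
    refine (integrableOn_Ici_iff_integrableOn_Ioi).mpr ?_
    simpa [neg_mul, one_mul, IntegrableOn] using (exp_neg_integrableOn_Ioi x one_pos).const_mul (1/2)
  rw [← ofReal_integral_eq_lintegral_ofReal hint (ae_of_all _ fun s => by positivity)]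
  rw [ENNReal.toReal_ofReal (integral_nonneg fun s => by positivity)]
  rw [integral_Ici_eq_integral_Ioi, MeasureTheory.integral_const_mul]
  rw [integral_exp_neg_Ioi]

lemma integral_nuExp (g : ℝ → ℝ) :
    ∫ s, g s ∂nuExp = ∫ s, (1/2) * exp (-|s|) * g s := by
  have hc : Continuous fun x : ℝ => (1/2) * exp (-|x|) := by continuity
  rw [nuExp]
  have heq : (fun x : ℝ => ENNReal.ofReal ((1/2) * exp (-|x|)))
      = fun x => ((Real.toNNReal ((1/2) * exp (-|x|)) : ℝ≥0) : ℝ≥0∞) := rfl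
  rw [heq, integral_withDensity_eq_integral_smul hc.measurable.real_toNNReal]
  congr 1
  ext s
  rw [NNReal.smul_def, Real.coe_toNNReal _ (by positivity)]
  simp [smul_eq_mul]

lemma integral_exp_nuExp {t : ℝ} (ht : t ∈ Ioo (-1:ℝ) 1) :
    ∫ s, exp (t * s) ∂nuExp = 1 / (1 - t^2) := by
  obtain ⟨ht1, ht2⟩ := ht
  have h1t : 0 < 1 - t := by linarith
  have h1t' : 0 < 1 + t := by linarith
  rw [integral_nuExp]
  set h : ℝ → ℝ := fun s => (1/2) * exp (-|s|) * exp (t * s) with hh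
  have eqIoi : EqOn (fun s => (1/2) * exp (-((1-t) * s))) h (Ioi 0) := by
    intro s hs
    rw [mem_Ioi] at hs
    simp only [hh, abs_of_pos hs, mul_assoc, ← exp_add]
    ring_nf
  have eqIic : EqOn (fun s => (1/2) * exp ((1+t) * s)) h (Iic 0) := by
    intro s hs
    rw [mem_Iic] at hs
    simp only [hh, abs_of_nonpos hs, neg_neg, mul_assoc, ← exp_add]
    ring_nf
  have hintIoi : IntegrableOn h (Ioi (0:ℝ)) :=
    IntegrableOn.congr_fun ((exp_intOn_Ioi h1t).const_mul (1/2)) eqIoi measurableSet_Ioi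
  have hintIic : IntegrableOn h (Iic (0:ℝ)) :=
    IntegrableOn.congr_fun ((exp_intOn_Iic h1t').const_mul (1/2)) eqIic measurableSet_Iic
  rw [← intervalIntegral.integral_Iic_add_Ioi hintIic hintIoi]
  have vIoi : ∫ s in Ioi (0:ℝ), h s = (1/2) * (1/(1-t)) := by
    rw [← setIntegral_congr_fun measurableSet_Ioi eqIoi, MeasureTheory.integral_const_mul,
      exp_int_Ioi h1t]
  have vIic : ∫ s in Iic (0:ℝ), h s = (1/2) * (1/(1+t)) := by
    rw [← setIntegral_congr_fun measurableSet_Iic eqIic, MeasureTheory.integral_const_mul,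
      exp_int_Iic h1t']
  rw [vIoi, vIic]
  have h12 : 1 - t^2 ≠ 0 := by nlinarith
  field_simp
  ring

lemma lambdaNu_eq {t : ℝ} (ht : t ∈ Ioo (-1:ℝ) 1) : LambdaNu t = -log (1 - t^2) := by
  rw [LambdaNu, integral_exp_nuExp ht, one_div, log_inv]

lemma term_le {x t : ℝ} (hx : 0 ≤ x) (ht : t ∈ Ioo (-1:ℝ) 1) :
    t * x - LambdaNu t ≤ x := by
  rw [lambdaNu_eq ht]
  obtain ⟨ht1, ht2⟩ := ht
  have h1 : t * x ≤ x := mul_le_of_le_one_left hx ht2.le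
  have h2 : log (1 - t^2) ≤ 0 := log_nonpos (by nlinarith) (by nlinarith)
  linarith

lemma lambdaStar_le {x : ℝ} (hx : 0 ≤ x) : LambdaNuStar x ≤ x :=
  ciSup_le fun t => term_le hx t.2

lemma le_lambdaStar {x : ℝ} (hx : 2 ≤ x) : x - 1 - log x ≤ LambdaNuStar x := by
  have hx0 : (0:ℝ) < x := by linarith
  have htmem : (1 - 1/x) ∈ Ioo (-1:ℝ) 1 := by
    constructor
    · have : 1/x ≤ 1/2 := by
        rw [div_le_div_iff₀ hx0 (by norm_num)]; linarith
      linarith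
    · have : 0 < 1/x := by positivity
      linarith
  have hb : BddAbove (range fun t : (Ioo (-1:ℝ) 1) => (t : ℝ) * x - LambdaNu t) := by
    refine ⟨x, ?_⟩
    rintro y ⟨t, rfl⟩
    exact term_le (by linarith) t.2
  refine le_trans ?_ (le_ciSup hb ⟨_, htmem⟩)
  rw [lambdaNu_eq htmem]
  have e1 : (1 - 1/x) * x = x - 1 := by field_simp
  have e2 : 1 - (1 - 1/x)^2 = (2*x - 1)/x^2 := by field_simp; ring
  rw [e1, e2]
  have hlog : log (1/x) ≤ log ((2*x-1)/x^2) := by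
    apply log_le_log (by positivity)
    rw [div_le_div_iff₀ hx0 (by positivity)]
    nlinarith
  rw [one_div, log_inv] at hlog
  linarith

lemma neg_log_nuExp {x : ℝ} (hx : 0 ≤ x) :
    -log ((nuExp (Ici x)).toReal) = x + log 2 := by
  rw [nuExp_Ici hx, log_mul (by norm_num) (exp_ne_zero _), log_exp, one_div, log_inv]
  ring

theorem stmt15 :
    Tendsto (fun x : ℝ => (-log ((nuExp (Ici x)).toReal)) / LambdaNuStar x)
      atTop (𝓝 1) := by
  have hlogdiv : Tendsto (fun x : ℝ => log x / x) atTop (𝓝 0) :=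
    isLittleO_log_id_atTop.tendsto_div_nhds_zero
  have hinv : Tendsto (fun x : ℝ => 1/x) atTop (𝓝 0) := by
    simpa only [one_div] using tendsto_inv_atTop_zero
  -- lower bound function
  have tlo : Tendsto (fun x : ℝ => (x + log 2)/x) atTop (𝓝 1) := by
    have : Tendsto (fun x : ℝ => 1 + log 2 * (1/x)) atTop (𝓝 (1 + log 2 * 0)) :=
      tendsto_const_nhds.add (hinv.const_mul _)
    rw [mul_zero, add_zero] at this
    refine this.congr' ?_
    filter_upwards [eventually_gt_atTop (0:ℝ)] with x hx
    field_simp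
  have tden : Tendsto (fun x : ℝ => (x - 1 - log x)/x) atTop (𝓝 1) := by
    have : Tendsto (fun x : ℝ => 1 - 1/x - log x / x) atTop (𝓝 (1 - 0 - 0)) :=
      (tendsto_const_nhds.sub hinv).sub hlogdiv
    rw [sub_zero, sub_zero] at this
    refine this.congr' ?_
    filter_upwards [eventually_gt_atTop (0:ℝ)] with x hx
    field_simp
  have thi : Tendsto (fun x : ℝ => (x + log 2)/(x - 1 - log x)) atTop (𝓝 1) := by
    have h := tlo.div tden one_ne_zero
    rw [div_one] at h
    refine h.congr' ?_
    filter_upwards [eventually_gt_atTop (0:ℝ)] with x hx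
    simp only [Pi.div_apply]
    rw [div_div_div_comm, div_self hx.ne', div_one]
  -- basic bounds eventually
  have hev : ∀ᶠ x : ℝ in atTop,
      (x + log 2)/x ≤ (-log ((nuExp (Ici x)).toReal)) / LambdaNuStar x ∧
      (-log ((nuExp (Ici x)).toReal)) / LambdaNuStar x ≤ (x + log 2)/(x - 1 - log x) := by
    filter_upwards [eventually_ge_atTop (2:ℝ)] with x hx
    have hx0 : (0:ℝ) < x := by linarith
    have hlow : x - 1 - log x ≤ LambdaNuStar x := le_lambdaStar hx
    have hposden : 0 < x - 1 - log x := by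
      have := log_lt_sub_one_of_pos hx0 (by linarith)
      linarith
    have hΛpos : 0 < LambdaNuStar x := lt_of_lt_of_le hposden hlow
    have hΛle : LambdaNuStar x ≤ x := lambdaStar_le (by linarith)
    have hN : 0 ≤ x + log 2 := by
      have := log_nonneg (by norm_num : (1:ℝ) ≤ 2)
      linarith
    rw [neg_log_nuExp (by linarith : (0:ℝ) ≤ x)]
    constructor
    · exact div_le_div_of_nonneg_left hN hΛpos hΛle
    · exact div_le_div_of_nonneg_left hN hposden hlow
  exact tendsto_of_tendsto_of_tendsto_of_le_of_le' tlo thi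
    (hev.mono fun x h => h.1) (hev.mono fun x h => h.2)
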